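/- Let r and s be integers with r > s > 0 and let q be a real polynomial of degree at most s−1. Define h : (0,1) → ℝ by h(t) = t^{r−1/2} · (d^{r+1}/dt^{r+1})[ √t (1−t)^{r−s} q(t) ], i.e., t^{r−1/2} times the (r+1)-st derivative of the function t ↦ t^{1/2}(1−t)^{r−s} q(t). If h vanishes at s distinct points of (0,1), then q is the zero polynomial. -/

import Mathlib

/-!
Write `p = (1 - X)^(r-s) q`. On `(0, ∞)`, `√t p(t) = ∑ pₖ t^(k+1/2)`, so
`t^(r+1/2) (d/dt)^(r+1) [√t p(t)] = P(t)` with `P = ∑ (k+1/2)_{(r+1)} pₖ Xᵏ`, a falling factorial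
`(k+1/2)_{(r+1)}` whose sign is `(-1)^(r-k)` for `k ≤ r`. Hence the coefficients of `P` have,
up to a global sign, the signs of those of `p(-X)`, and Descartes' rule of signs gives
`s ≤ V(p(-X))`, where `V` counts sign variations. On the other hand
`V(p) + V(p(-X)) ≤ deg p ≤ r - 1`, while each factor `X - 1` of `p` adds a sign variation, so
`V(p) ≥ r - s`. Together, `s ≤ s - 1`.
-/

open Polynomial Finset Topology

namespace Polynomial

section Ring

variable {R : Type*} [Ring R]

theorem coeff_comp_neg_X (P : R[X]) (n : ℕ) : (P.comp (-X)).coeff n = (-1) ^ n * P.coeff n := by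
  rw [← neg_one_mul (X : R[X]), ← C_1, ← C_neg, comp_C_mul_X_coeff]
  exact ((Commute.neg_one_left _).pow_left n).eq.symm

theorem natDegree_comp_neg_X (P : R[X]) : (P.comp (-X)).natDegree = P.natDegree :=
  natDegree_eq_natDegree degree_comp_neg_X

theorem eraseLead_comp_neg_X (P : R[X]) : (P.comp (-X)).eraseLead = P.eraseLead.comp (-X) := by
  ext n
  simp only [eraseLead_coeff, coeff_comp_neg_X, natDegree_comp_neg_X]
  split_ifs <;> simp

end Ring

theorem signVariations_eq_of_sign_coeff_eq {R : Type*} [Semiring R] [LinearOrder R]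
    {P Q : R[X]} (h : ∀ k, SignType.sign (P.coeff k) = SignType.sign (Q.coeff k)) :
    P.signVariations = Q.signVariations := by
  have hsupport : P.support = Q.support := by
    ext k
    rw [mem_support_iff, mem_support_iff, ← sign_ne_zero, h, sign_ne_zero]
  simp only [signVariations, coeffList, degree, hsupport, List.map_map]
  congr 4
  exact List.map_congr_left fun k _ => h k

section StrictOrderedCommRing

variable {R : Type*} [CommRing R] [LinearOrder R] [IsStrictOrderedRing R]

/- Dropping the leading term `a Xᵈ` costs `P` a variation iff `a` and the next coefficient `b Xᵉ`
have opposite signs, and costs `P(-X)` one iff `(-1)ᵈ a` and `(-1)ᵉ b` do; when `d = e + 1` these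
cannot both happen. -/
theorem signVariations_add_signVariations_comp_neg_X_le (P : R[X]) :
    P.signVariations + (P.comp (-X)).signVariations ≤ P.natDegree := by
  induction hd : P.natDegree using Nat.strong_induction_on generalizing P with | _ d ih =>
  rcases eq_or_ne P 0 with rfl | hP
  · simp
  have hPc : P.comp (-X) ≠ 0 := by simpa using hP
  rw [signVariations_eq_eraseLead_add_ite hP, signVariations_eq_eraseLead_add_ite hPc,
    eraseLead_comp_neg_X, comp_neg_X_leadingCoeff_eq, comp_neg_X_leadingCoeff_eq, hd]
  rcases P.eraseLead_natDegree_lt_or_eraseLead_eq_zero with hlt | hE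
  swap
  · simp [hE, hP]
  set E := P.eraseLead
  set e := E.natDegree
  have ihE := ih e (hd ▸ hlt) E rfl
  have ha : SignType.sign P.leadingCoeff ≠ 0 := by simpa using hP
  have hdrop : (if SignType.sign P.leadingCoeff = -SignType.sign E.leadingCoeff then 1 else 0) +
      (if SignType.sign ((-1) ^ d * P.leadingCoeff) = -SignType.sign ((-1) ^ e * E.leadingCoeff)
        then 1 else 0) ≤ d - e := by
    obtain rfl | h2 : d = e + 1 ∨ e + 2 ≤ d := by omega
    · simp only [sign_mul, sign_pow, Left.sign_neg, sign_one, pow_succ]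
      generalize SignType.sign P.leadingCoeff = x, SignType.sign E.leadingCoeff = y at *
      rcases neg_one_pow_eq_or SignType e with h | h <;>
        rw [h, Nat.add_sub_cancel_left] <;> revert x y <;> decide
    · split_ifs <;> omega
  omega

theorem signVariations_add_le_signVariations_X_sub_C_pow_mul {P : R[X]} (hP : P ≠ 0) {η : R}
    (hη : 0 < η) (m : ℕ) : P.signVariations + m ≤ ((X - C η) ^ m * P).signVariations := by
  induction m with
  | zero => simp
  | succ m ih =>
    rw [pow_succ', mul_assoc, ← add_assoc]
    exact (Nat.add_le_add_right ih 1).trans <| succ_signVariations_le_X_sub_C_mul hη <|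
      mul_ne_zero (pow_ne_zero _ (X_sub_C_ne_zero η)) hP

theorem card_le_signVariations {P : R[X]} (hP : P ≠ 0) {S : Finset R}
    (hS : ∀ x ∈ S, 0 < x ∧ P.IsRoot x) : #S ≤ P.signVariations :=
  calc #S ≤ #(P.roots.filter (0 < ·)).toFinset :=
        card_le_card fun x hx => by simp [hP, (hS x hx).1, (hS x hx).2.eq_zero]
    _ ≤ Multiset.card (P.roots.filter (0 < ·)) := Multiset.toFinset_card_le _
    _ = P.roots.countP (0 < ·) := (Multiset.countP_eq_card_filter _ _).symm
    _ ≤ P.signVariations := roots_countP_pos_le_signVariations P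

theorem neg_one_pow_mul_descPochhammer_eval_pos {k : ℕ} {x : R} (hkx : k < x)
    (hxk : x < k + 1) (m : ℕ) : 0 < (-1) ^ m * (descPochhammer R (k + 1 + m)).eval x := by
  rw [← descPochhammer_mul, eval_mul, eval_comp, eval_sub, eval_X, eval_natCast,
    mul_left_comm, ← neg_neg (x - _), ← ascPochhammer_eval_neg_eq_descPochhammer]
  refine mul_pos (descPochhammer_pos (by push_cast; linarith)) (ascPochhammer_pos _ _ ?_)
  push_cast
  linarith

end StrictOrderedCommRing

/-- The polynomial `x ^ (n - 1/2) * (d/dx)^n (√x * p x)` on `x > 0`. -/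
noncomputable def sqrtDerivPoly (n : ℕ) (p : ℝ[X]) : ℝ[X] :=
  ∑ k ∈ range (p.natDegree + 1),
    monomial k ((descPochhammer ℝ n).eval ((k : ℝ) + 1 / 2) * p.coeff k)

theorem coeff_sqrtDerivPoly (n : ℕ) (p : ℝ[X]) (k : ℕ) :
    (sqrtDerivPoly n p).coeff k = (descPochhammer ℝ n).eval ((k : ℝ) + 1 / 2) * p.coeff k := by
  rw [sqrtDerivPoly, finsetSum_coeff]
  simp only [coeff_monomial, sum_ite_eq', mem_range, Nat.lt_succ_iff]
  split_ifs with hk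
  · rfl
  · rw [coeff_eq_zero_of_natDegree_lt (not_le.mp hk), mul_zero]

open Real in
theorem rpow_mul_iteratedDeriv_sqrt_mul_eval (p : ℝ[X]) (n : ℕ) {x : ℝ} (hx : 0 < x) :
    x ^ ((n : ℝ) - 1 / 2) * iteratedDeriv n (fun y => √y * p.eval y) x =
      (sqrtDerivPoly n p).eval x := by
  have hloc : (fun y => √y * p.eval y) =ᶠ[𝓝 x]
      fun y => ∑ k ∈ range (p.natDegree + 1), p.coeff k * y ^ ((k : ℝ) + 1 / 2) := by
    filter_upwards [Ioi_mem_nhds hx] with y hy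
    rw [eval_eq_sum_range, mul_sum]
    refine sum_congr rfl fun k _ => ?_
    rw [rpow_add hy, rpow_natCast, sqrt_eq_rpow]
    ring
  rw [hloc.iteratedDeriv_eq, iteratedDeriv_fun_sum fun k _ =>
    contDiffAt_const.mul (contDiffAt_rpow_const_of_ne hx.ne')]
  simp only [iteratedDeriv_const_mul_field, iteratedDeriv_eq_iterate, iter_deriv_rpow_const]
  rw [sqrtDerivPoly, eval_finsetSum, mul_sum]
  refine sum_congr rfl fun k _ => ?_
  have hpow : x ^ ((n : ℝ) - 1 / 2) * x ^ ((k : ℝ) + 1 / 2 - n) = x ^ k := by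
    rw [← rpow_add hx, ← rpow_natCast]
    ring_nf
  rw [eval_monomial, ← hpow]
  ring

theorem sign_coeff_sqrtDerivPoly {n : ℕ} {p : ℝ[X]} (hp : p.natDegree < n) (k : ℕ) :
    SignType.sign ((sqrtDerivPoly n p).coeff k) =
      SignType.sign ((C ((-1) ^ (n - 1)) * p.comp (-X)).coeff k) := by
  rw [coeff_sqrtDerivPoly, coeff_C_mul, coeff_comp_neg_X]
  rcases lt_or_ge k n with hk | hk
  · obtain ⟨m, rfl⟩ : ∃ m, n = k + 1 + m := ⟨n - (k + 1), by omega⟩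
    have hpos := neg_one_pow_mul_descPochhammer_eval_pos (k := k) (x := (k : ℝ) + 1 / 2)
      (by linarith) (by linarith) m
    have hsq : ∀ j : ℕ, ((-1 : ℝ) ^ j) * (-1) ^ j = 1 := fun j => by
      rw [← mul_pow, neg_one_mul, neg_neg, one_pow]
    have hsign : (-1 : ℝ) ^ (k + 1 + m - 1) * (-1) ^ k = (-1) ^ m := by
      rw [show k + 1 + m - 1 = k + m by omega, pow_add, mul_right_comm, hsq, one_mul]
    set D := (descPochhammer ℝ (k + 1 + m)).eval ((k : ℝ) + 1 / 2)
    have hsplit : D * p.coeff k = ((-1) ^ m * D) * ((-1) ^ m * p.coeff k) := by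
      linear_combination (-(D * p.coeff k)) * hsq m
    rw [hsplit, sign_mul, sign_pos hpos, one_mul, ← mul_assoc, hsign]
  · rw [coeff_eq_zero_of_natDegree_lt (by omega)]
    simp

theorem sqrtDerivPoly_isRoot_iff (p : ℝ[X]) (n : ℕ) {x : ℝ} (hx : 0 < x) :
    (sqrtDerivPoly (n + 1) p).IsRoot x ↔
      x ^ ((n : ℝ) - 1 / 2) * iteratedDeriv (n + 1) (fun y => √y * p.eval y) x = 0 := by
  rw [IsRoot, ← rpow_mul_iteratedDeriv_sqrt_mul_eval p _ hx,
    show ((n + 1 : ℕ) : ℝ) - 1 / 2 = (n - 1 / 2) + 1 by push_cast; ring,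
    Real.rpow_add_one hx.ne', mul_right_comm, mul_eq_zero, or_iff_left hx.ne']

theorem sqrtDerivPoly_ne_zero {n : ℕ} {p : ℝ[X]} (hp : p.natDegree < n) (hp0 : p ≠ 0) :
    sqrtDerivPoly n p ≠ 0 := by
  have hp0' : C ((-1 : ℝ) ^ (n - 1)) * p.comp (-X) ≠ 0 := mul_ne_zero (by simp) (by simpa using hp0)
  refine fun h => hp0' (ext fun k => ?_)
  simpa [h] using (sign_coeff_sqrtDerivPoly hp k).symm

theorem signVariations_sqrtDerivPoly {n : ℕ} {p : ℝ[X]} (hp : p.natDegree < n) :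
    (sqrtDerivPoly n p).signVariations = (p.comp (-X)).signVariations := by
  rw [signVariations_eq_of_sign_coeff_eq (sign_coeff_sqrtDerivPoly hp),
    signVariations_C_mul _ (by simp)]

end Polynomial

/-- Let `r > s > 0` and let `q` be a real polynomial of degree at
most `s-1`.  Define `h(t) = t^{r-1/2} · (d^{r+1}/dt^{r+1})[√t (1-t)^{r-s} q(t)]` for
`t ∈ (0,1)`.  If `h` vanishes at `s` distinct points of `(0,1)`, then `q = 0`. -/
theorem statement11 (r s : ℕ) (hs : 0 < s) (hrs : s < r)
    (q : Polynomial ℝ) (hq : q.natDegree ≤ s - 1)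
    (t : Fin s → ℝ) (ht : Function.Injective t)
    (ht01 : ∀ i, t i ∈ Set.Ioo (0 : ℝ) 1)
    (hvanish : ∀ i, (t i) ^ ((r : ℝ) - 1 / 2)
      * iteratedDeriv (r + 1)
          (fun x : ℝ => Real.sqrt x * (1 - x) ^ (r - s) * Polynomial.eval x q) (t i)
      = 0) :
    q = 0 := by
  by_contra hq0
  set m := r - s
  set p : ℝ[X] := C ((-1) ^ m) * ((X - C 1) ^ m * q)
  have hp0 : p ≠ 0 := mul_ne_zero (by simp) (mul_ne_zero (pow_ne_zero _ (X_sub_C_ne_zero 1)) hq0)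
  have hp_deg : p.natDegree ≤ r - 1 :=
    calc p.natDegree ≤ ((X - C 1) ^ m * q).natDegree := natDegree_C_mul_le _ _
      _ = m + q.natDegree := by
        rw [natDegree_mul (pow_ne_zero _ (X_sub_C_ne_zero 1)) hq0, natDegree_pow,
          natDegree_X_sub_C, mul_one]
      _ ≤ r - 1 := by omega
  have hfun : (fun x : ℝ => √x * (1 - x) ^ m * q.eval x) = fun x => √x * p.eval x := by
    funext x
    simp only [p, eval_mul, eval_C, eval_pow, eval_sub, eval_X]
    rw [show (1 - x) ^ m = (-1) ^ m * (x - 1) ^ m by rw [← mul_pow]; ring]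
    ring
  have hp_lt : p.natDegree < r + 1 := by omega
  have hroots : ∀ x ∈ univ.image t, 0 < x ∧ (sqrtDerivPoly (r + 1) p).IsRoot x := by
    simp only [mem_image, mem_univ, true_and, forall_exists_index, forall_apply_eq_imp_iff]
    exact fun i => ⟨(ht01 i).1, (sqrtDerivPoly_isRoot_iff p r (ht01 i).1).mpr (hfun ▸ hvanish i)⟩
  have hcount : s ≤ (sqrtDerivPoly (r + 1) p).signVariations := by
    simpa [card_image_of_injective _ ht] using
      card_le_signVariations (sqrtDerivPoly_ne_zero hp_lt hp0) hroots
  have hVp : m ≤ p.signVariations := by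
    rw [signVariations_C_mul _ (by simp)]
    exact (Nat.le_add_left _ _).trans
      (signVariations_add_le_signVariations_X_sub_C_pow_mul hq0 one_pos m)
  have := signVariations_add_signVariations_comp_neg_X_le p
  rw [signVariations_sqrtDerivPoly hp_lt] at hcount
  omega
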